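/- arXiv:1707.00615 — 3 statements merged into one kernel-verified Lean document; each statement's English description precedes it below -/
import Mathlib

section
/- Let M be an atom-free MVS and {X_i : i = 1,...,n} a finite family of M-metrizable topological spaces. Then the product space X = X_1 × ... × X_n is M-metrizable; specifically, f(x,y) = Σ_{i=1}^n f_i(x_i,y_i) is a quasimetric function inducing the product topology, where each f_i induces the topology of X_i. -/
universe u v w

structure MVS (M : Type u) where
  add : M → M → M
  e : M
  assoc : ∀ a b c : M, add (add a b) c = add a (add b c)
  add_e : ∀ a : M, add a e = a
  e_add : ∀ a : M, add e a = a
  eq_e_of_add_eq_e : ∀ a b : M, add a b = e → a = e ∧ b = e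
  exists_common : ∀ a b : M, a ≠ e → b ≠ e →
    ∃ c, c ≠ e ∧ (∃ d, add c d = a) ∧ (∃ d, add c d = b)
  nontrivial : ∃ a : M, a ≠ e

variable {M : Type u} {X : Type v}

/-- `a ⊴ b` iff there is `c` with `a + c = b`. -/
def MVS.le (S : MVS M) (a b : M) : Prop := ∃ c, S.add a c = b

/-- `a ◁ b` iff there is `c ≠ e` with `a + c = b`. -/
def MVS.lt (S : MVS M) (a b : M) : Prop := ∃ c, c ≠ S.e ∧ S.add a c = b

def MVS.Commutative (S : MVS M) : Prop := ∀ a b, S.add a b = S.add b a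

/-- An MVS is atom-free if it is commutative and every `m ≠ e` admits `n ≠ e` with `n ◁ m`. -/
def MVS.AtomFree (S : MVS M) : Prop :=
  S.Commutative ∧ ∀ m, m ≠ S.e → ∃ n, n ≠ S.e ∧ S.lt n m

/-- A quasimetric function: triangle inequality and `f x x = e`. -/
def IsQuasimetric (S : MVS M) (f : X → X → M) : Prop :=
  (∀ x y z, S.le (f x z) (S.add (f x y) (f y z))) ∧ ∀ x, f x x = S.e

/-- Open ball `B_f(x,m) = {y | f x y ◁ m}`. -/
def ball (S : MVS M) (f : X → X → M) (x : X) (m : M) : Set X := {y | S.lt (f x y) m}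

/-- Closed ball `B̄_f(x,m) = {y | f x y ⊴ m}`. -/
def closedBall (S : MVS M) (f : X → X → M) (x : X) (m : M) : Set X := {y | S.le (f x y) m}

/-- The topology induced by a quasimetric function: open balls form a neighbourhood base. -/
def qTopology (S : MVS M) (f : X → X → M) : TopologicalSpace X :=
  TopologicalSpace.mkOfNhds fun x => ⨅ m ∈ {m : M | m ≠ S.e}, Filter.principal (ball S f x m)

/-- Entourage `U_m = {(x,y) | f x y ⊴ m}`. -/
def ent (S : MVS M) (f : X → X → M) (m : M) : Set (X × X) := {p | S.le (f p.1 p.2) m}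

/-- `qcomp A B = A ∘ B = {(x,z) | ∃ y, (x,y) ∈ B ∧ (y,z) ∈ A}`. -/
def qcomp (A B : Set (X × X)) : Set (X × X) := {p | ∃ y, (p.1, y) ∈ B ∧ (y, p.2) ∈ A}

def IsQuasiUniformity (U : Set (Set (X × X))) : Prop :=
  U.Nonempty ∧
  (∀ u ∈ U, ∀ x : X, (x, x) ∈ u) ∧
  (∀ u ∈ U, ∀ v : Set (X × X), u ⊆ v → v ∈ U) ∧
  (∀ u ∈ U, ∀ v ∈ U, u ∩ v ∈ U) ∧
  (∀ u ∈ U, ∃ v ∈ U, qcomp v v ⊆ u)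

def IsBaseOf (B U : Set (Set (X × X))) : Prop := B ⊆ U ∧ ∀ u ∈ U, ∃ b ∈ B, b ⊆ u

/-- `U + V` : the intersection of all entourages `U_n` containing `V ∘ U`. -/
def addEnt (S : MVS M) (f : X → X → M) (A B : Set (X × X)) : Set (X × X) :=
  ⋂₀ {w | (∃ m, ent S f m = w) ∧ qcomp B A ⊆ w}

/-- The topology induced by a base of a quasiuniformity: sections `U[x]` form a
neighbourhood base. -/
def quTopology (B : Set (Set (X × X))) : TopologicalSpace X :=
  TopologicalSpace.mkOfNhds fun x => ⨅ u ∈ B, Filter.principal {y | (x, y) ∈ u}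

/-- `n`-fold sum `m + ⋯ + m`. -/
def nfold (S : MVS M) : ℕ → M → M
  | 0, _ => S.e
  | Nat.succ n, m => S.add m (nfold S n m)

/-!
Atom-freeness splits any radius `m ≠ e` as `c₁ + ⋯ + cₙ + r` with all terms `≠ e`, so the
product of the balls of radii `cᵢ` lies in the ball of radius `m` for the sum `f`. Conversely
every coordinate distance is dominated by `f`, so the `f`-ball whose radius is a common lower
bound of finitely many radii lies in the corresponding basic product neighbourhood.
Atom-freeness is also what makes open balls open, so that balls are neighbourhood bases.
-/

open Filter

namespace MVS

variable (S : MVS M)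

theorem le_refl (a : M) : S.le a a := ⟨S.e, S.add_e a⟩

theorem le_trans {a b c : M} (hab : S.le a b) (hbc : S.le b c) : S.le a c := by
  obtain ⟨p, rfl⟩ := hab
  obtain ⟨q, rfl⟩ := hbc
  exact ⟨S.add p q, (S.assoc ..).symm⟩

theorem le_of_lt {a b : M} (h : S.lt a b) : S.le a b :=
  let ⟨c, _, hc⟩ := h
  ⟨c, hc⟩

theorem lt_of_le_of_lt {a b c : M} (hab : S.le a b) (hbc : S.lt b c) : S.lt a c := by
  obtain ⟨p, rfl⟩ := hab
  obtain ⟨q, hq, rfl⟩ := hbc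
  exact ⟨S.add p q, fun h => hq (S.eq_e_of_add_eq_e _ _ h).2, (S.assoc ..).symm⟩

theorem lt_of_lt_of_le {a b c : M} (hab : S.lt a b) (hbc : S.le b c) : S.lt a c := by
  obtain ⟨p, hp, rfl⟩ := hab
  obtain ⟨q, rfl⟩ := hbc
  exact ⟨S.add p q, fun h => hp (S.eq_e_of_add_eq_e _ _ h).1, (S.assoc ..).symm⟩

theorem e_lt {m : M} (hm : m ≠ S.e) : S.lt S.e m := ⟨m, hm, S.e_add m⟩

theorem add_lt_add_left {a b : M} (h : S.lt a b) (c : M) : S.lt (S.add c a) (S.add c b) := by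
  obtain ⟨p, hp, rfl⟩ := h
  exact ⟨p, hp, S.assoc ..⟩

theorem add_le_add (hS : S.Commutative) {a b c d : M} (hab : S.le a b) (hcd : S.le c d) :
    S.le (S.add a c) (S.add b d) := by
  obtain ⟨p, rfl⟩ := hab
  obtain ⟨q, rfl⟩ := hcd
  refine ⟨S.add p q, ?_⟩
  rw [S.assoc, ← S.assoc c p q, hS c p, S.assoc p c q, ← S.assoc]

theorem exists_ne_e_le_of_finite {ι : Type*} {I : Set ι} (hI : I.Finite) {m : ι → M}
    (hm : ∀ i ∈ I, m i ≠ S.e) : ∃ c, c ≠ S.e ∧ ∀ i ∈ I, S.le c (m i) := by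
  induction I, hI using Set.Finite.induction_on with
  | empty =>
    obtain ⟨c, hc⟩ := S.nontrivial
    exact ⟨c, hc, by simp⟩
  | @insert j I _ _ ih =>
    obtain ⟨c', hc', hc'I⟩ := ih fun i hi => hm i (Set.mem_insert_of_mem j hi)
    obtain ⟨c, hc, hcc', hcj⟩ := S.exists_common c' (m j) hc' (hm j (Set.mem_insert j I))
    exact ⟨c, hc, Set.forall_mem_insert.2 ⟨hcj, fun i hi => S.le_trans hcc' (hc'I i hi)⟩⟩

def fsum {k : ℕ} (a : Fin k → M) : M := (List.ofFn a).foldr S.add S.e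

theorem fsum_succ {k : ℕ} (a : Fin (k + 1) → M) :
    S.fsum a = S.add (a 0) (S.fsum fun i => a i.succ) := by
  simp only [fsum, List.ofFn_succ, List.foldr_cons]

theorem fsum_eq_e {k : ℕ} {a : Fin k → M} (h : ∀ i, a i = S.e) : S.fsum a = S.e := by
  induction k with
  | zero => rfl
  | succ k ih => rw [S.fsum_succ, h 0, S.e_add, ih fun i => h i.succ]

theorem fsum_add (hS : S.Commutative) {k : ℕ} (a b : Fin k → M) :
    S.fsum (fun i => S.add (a i) (b i)) = S.add (S.fsum a) (S.fsum b) := by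
  induction k with
  | zero => exact (S.add_e _).symm
  | succ k ih =>
    rw [S.fsum_succ, S.fsum_succ a, S.fsum_succ b, ih, S.assoc, ← S.assoc (b 0), hS (b 0), S.assoc, ← S.assoc]

theorem fsum_le_fsum (hS : S.Commutative) {k : ℕ} {a b : Fin k → M}
    (h : ∀ i, S.le (a i) (b i)) : S.le (S.fsum a) (S.fsum b) := by
  induction k with
  | zero => exact S.le_refl _
  | succ k ih =>
    rw [S.fsum_succ, S.fsum_succ b]
    exact S.add_le_add hS (h 0) (ih fun i => h i.succ)

theorem le_fsum (hS : S.Commutative) {k : ℕ} (a : Fin k → M) (i : Fin k) :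
    S.le (a i) (S.fsum a) := by
  induction k with
  | zero => exact i.elim0
  | succ k ih =>
    rw [S.fsum_succ]
    induction i using Fin.cases with
    | zero => exact ⟨_, rfl⟩
    | succ j =>
      obtain ⟨p, hp⟩ := ih (fun i => a i.succ) j
      exact ⟨S.add p (a 0), by rw [← S.assoc, hp, hS]⟩

theorem exists_fsum_lt (hS : S.AtomFree) (k : ℕ) {m : M} (hm : m ≠ S.e) :
    ∃ c : Fin k → M, (∀ i, c i ≠ S.e) ∧ S.lt (S.fsum c) m := by
  induction k generalizing m with
  | zero => exact ⟨Fin.elim0, fun i => i.elim0, S.e_lt hm⟩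
  | succ k ih =>
    obtain ⟨a, ha, b, hb, rfl⟩ := hS.2 m hm
    obtain ⟨c, hc, hcb⟩ := ih hb
    refine ⟨Fin.cons a c, Fin.cases ha hc, ?_⟩
    rw [S.fsum_succ]
    exact S.add_lt_add_left hcb a

end MVS

section QuasimetricTopology

variable (S : MVS M) {g : X → X → M}

theorem exists_ball_subset_ball (hS : S.AtomFree) (hg : IsQuasimetric S g) {x y : X} {m : M}
    (hy : y ∈ ball S g x m) : ∃ r, r ≠ S.e ∧ ball S g y r ⊆ ball S g x m := by
  obtain ⟨k, hk, hkm⟩ := hy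
  obtain ⟨r, hr, k', -, hrk⟩ := hS.2 k hk
  refine ⟨r, hr, fun z hz => ?_⟩
  have hyz : S.lt (S.add (g x y) (g y z)) m := by
    rw [← hkm]
    exact S.add_lt_add_left (S.lt_of_lt_of_le hz ⟨k', hrk⟩) _
  exact S.lt_of_le_of_lt (hg.1 x y z) hyz

theorem hasBasis_iInf_ball (x : X) :
    (⨅ m ∈ {m : M | m ≠ S.e}, 𝓟 (ball S g x m)).HasBasis (· ≠ S.e) (ball S g x) :=
  hasBasis_biInf_principal
    (fun a ha b hb =>
      let ⟨c, hc, hca, hcb⟩ := S.exists_common a b ha hb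
      ⟨c, hc, fun _ hy => S.lt_of_lt_of_le hy hca, fun _ hy => S.lt_of_lt_of_le hy hcb⟩)
    S.nontrivial

theorem hasBasis_nhds_qTopology (hS : S.AtomFree) (hg : IsQuasimetric S g) (x : X) :
    (@nhds X (qTopology S g) x).HasBasis (· ≠ S.e) (ball S g x) := by
  rw [qTopology, TopologicalSpace.nhds_mkOfNhds_of_hasBasis (hasBasis_iInf_ball S)]
  · exact hasBasis_iInf_ball S x
  · intro a m hm
    exact show S.lt (g a a) m from hg.2 a ▸ S.e_lt hm
  · intro a m hm
    refine Filter.mem_of_superset ((hasBasis_iInf_ball S a).mem_of_mem hm) fun y hy => ?_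
    obtain ⟨r, hr, hsub⟩ := exists_ball_subset_ball S hS hg hy
    exact (hasBasis_iInf_ball S y).mem_of_superset hr hsub

end QuasimetricTopology

section Product

variable (S : MVS M) {n : ℕ} {X : Fin n → Type*} {f : ∀ i, X i → X i → M}

theorem isQuasimetric_fsum (hS : S.Commutative) (hf : ∀ i, IsQuasimetric S (f i)) :
    IsQuasimetric S fun x y : ∀ i, X i => S.fsum fun i => f i (x i) (y i) := by
  refine ⟨fun x y z => ?_, fun x => S.fsum_eq_e fun i => (hf i).2 (x i)⟩
  rw [← S.fsum_add hS]
  exact S.fsum_le_fsum hS fun i => (hf i).1 (x i) (y i) (z i)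

theorem qTopology_fsum_eq_pi (hS : S.AtomFree) (hf : ∀ i, IsQuasimetric S (f i)) :
    qTopology S (fun x y : ∀ i, X i => S.fsum fun i => f i (x i) (y i)) =
      @Pi.topologicalSpace _ X fun i => qTopology S (f i) := by
  let _ : ∀ i, TopologicalSpace (X i) := fun i => qTopology S (f i)
  refine TopologicalSpace.ext_nhds fun x => ?_
  rw [nhds_pi]
  refine (hasBasis_nhds_qTopology S hS (isQuasimetric_fsum S hS.1 hf) x).ext
    (hasBasis_pi fun i => hasBasis_nhds_qTopology S hS (hf i) (x i)) ?_ ?_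
  · intro m hm
    obtain ⟨c, hc, hcm⟩ := S.exists_fsum_lt hS n hm
    refine ⟨(Set.univ, c), ⟨Set.finite_univ, fun i _ => hc i⟩, fun y hy => ?_⟩
    exact S.lt_of_le_of_lt (S.fsum_le_fsum hS.1 fun i => S.le_of_lt (hy i trivial)) hcm
  · rintro ⟨I, m⟩ ⟨hI, hm⟩
    obtain ⟨c, hc, hcm⟩ := S.exists_ne_e_le_of_finite hI hm
    refine ⟨c, hc, fun y hy i hi => ?_⟩
    have hi_le := S.le_fsum hS.1 (fun j => f j (x j) (y j)) i
    exact S.lt_of_lt_of_le (S.lt_of_le_of_lt hi_le hy) (hcm i hi)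

end Product

theorem stmt_7 {n : ℕ} (S : MVS M) (hAF : S.AtomFree)
    {X : Fin n → Type v} (t : ∀ i, TopologicalSpace (X i))
    (f : ∀ i, X i → X i → M)
    (hf : ∀ i, IsQuasimetric S (f i))
    (ht : ∀ i, qTopology S (f i) = t i) :
    IsQuasimetric S
      (fun x y : ∀ i, X i => (List.ofFn fun i => f i (x i) (y i)).foldr S.add S.e) ∧
    qTopology S
      (fun x y : ∀ i, X i => (List.ofFn fun i => f i (x i) (y i)).foldr S.add S.e) =
      @Pi.topologicalSpace (Fin n) X t := by
  obtain rfl : t = fun i => qTopology S (f i) := funext fun i => (ht i).symm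
  exact ⟨isQuasimetric_fsum S hAF.1 hf, qTopology_fsum_eq_pi S hAF hf⟩
end

section
/- Let M = {0,1,2} with operation max, and let (X,T) be an Alexandrov space, i.e., every point x has a smallest neighbourhood U(x). Define f : X × X → M by f(x,x) = 0, f(x,y) = 1 if y ∈ U(x) and y ≠ x, and f(x,y) = 2 if y ∉ U(x). Then f is a strict quasimetric function (f(x,y) = 0 implies x = y) inducing the topology T. -/
universe u v w

variable {M : Type u} {X : Type v}

def M3 : MVS (Fin 3) where
  add := max
  e := 0
  assoc := by decide
  add_e := by decide
  e_add := by decide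
  eq_e_of_add_eq_e := by decide
  exists_common := by decide
  nontrivial := ⟨1, by decide⟩


/-! Read `y ∈ U x` as a relation: it is reflexive, and transitive because `U x` is open and hence
a neighbourhood of each of its points. For the `max`-valued `f`, transitivity is exactly the
triangle inequality. The ball of radius `1` about `x` is `U x` and the ball of radius `2` is
everything, so the neighbourhood filter of `x` for `f` is the principal filter of `U x`, which is
the neighbourhood filter of `x` in `T`. -/

open Filter Topology

def IsSmallestNhds {X : Type v} [TopologicalSpace X] (U : X → Set X) : Prop :=
  ∀ x : X, U x ∈ 𝓝 x ∧ ∀ V ∈ 𝓝 x, U x ⊆ V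

namespace IsSmallestNhds

variable {X : Type v} [TopologicalSpace X] {U : X → Set X}

theorem mem_self (hU : IsSmallestNhds U) (x : X) : x ∈ U x :=
  mem_of_mem_nhds (hU x).1

theorem nhds_eq (hU : IsSmallestNhds U) (x : X) : 𝓝 x = 𝓟 (U x) :=
  le_antisymm (le_principal_iff.2 (hU x).1) (principal_le_iff.2 (hU x).2)

theorem isOpen (hU : IsSmallestNhds U) (x : X) : IsOpen (U x) :=
  subset_interior_iff_isOpen.1 <| (hU x).2 _ (interior_mem_nhds.2 (hU x).1)

theorem subset_of_mem (hU : IsSmallestNhds U) (x y : X) (hy : y ∈ U x) : U y ⊆ U x :=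
  (hU y).2 _ ((hU.isOpen x).mem_nhds hy)

end IsSmallestNhds

theorem TopologicalSpace.mkOfNhds_nhds {X : Type v} (T : TopologicalSpace X) :
    TopologicalSpace.mkOfNhds (@nhds X T) = T :=
  TopologicalSpace.ext_nhds fun x =>
    nhds_mkOfNhds _ x pure_le_nhds fun _ _ hs => eventually_eventually_nhds.2 hs

section M3

theorem M3_le_iff (a b : Fin 3) : M3.le a b ↔ a ≤ b :=
  ⟨fun ⟨c, hc⟩ => hc ▸ le_max_left a c, fun h => ⟨b, max_eq_right h⟩⟩

theorem M3_lt_one_iff (a : Fin 3) : M3.lt a 1 ↔ a ≤ 1 :=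
  ⟨fun ⟨c, _, hc⟩ => hc ▸ le_max_left a c, fun h => ⟨1, by decide, max_eq_right h⟩⟩

theorem M3_lt_two (a : Fin 3) : M3.lt a 2 :=
  ⟨2, by decide, max_eq_right (Fin.le_last a)⟩

variable {X : Type v}

theorem ball_M3_one (f : X → X → Fin 3) (x : X) : ball M3 f x 1 = {y | f x y ≤ 1} :=
  Set.ext fun y => M3_lt_one_iff (f x y)

theorem ball_M3_two (f : X → X → Fin 3) (x : X) : ball M3 f x 2 = Set.univ :=
  Set.eq_univ_of_forall fun y => M3_lt_two (f x y)

theorem qTopology_M3 (f : X → X → Fin 3) :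
    qTopology M3 f = TopologicalSpace.mkOfNhds fun x => 𝓟 {y | f x y ≤ 1} := by
  unfold qTopology
  congr 1
  funext x
  refine le_antisymm (iInf₂_le_of_le 1 (by decide) (principal_mono.2 (ball_M3_one f x).le))
    (le_iInf₂ fun m hm => ?_)
  obtain rfl | rfl : m = 1 ∨ m = 2 := by revert m; decide
  · rw [ball_M3_one]
  · rw [ball_M3_two, principal_univ]
    exact le_top

end M3

section AlexandrovQuasimetric

variable {X : Type v}

open Classical in
noncomputable def alexandrovQuasimetric (U : X → Set X) (x y : X) : Fin 3 :=
  if x = y then 0 else if y ∈ U x then 1 else 2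

variable (U : X → Set X)

theorem alexandrovQuasimetric_self (x : X) : alexandrovQuasimetric U x x = 0 :=
  if_pos rfl

theorem alexandrovQuasimetric_eq_zero_iff {x y : X} :
    alexandrovQuasimetric U x y = 0 ↔ x = y := by
  unfold alexandrovQuasimetric
  split_ifs <;> simp_all

theorem alexandrovQuasimetric_le_one_iff {x : X} (hx : x ∈ U x) (y : X) :
    alexandrovQuasimetric U x y ≤ 1 ↔ y ∈ U x := by
  unfold alexandrovQuasimetric
  split_ifs <;> simp_all

variable {U}

theorem alexandrovQuasimetric_le_max (hU : ∀ x y, y ∈ U x → U y ⊆ U x) (x y z : X) :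
    alexandrovQuasimetric U x z ≤
      max (alexandrovQuasimetric U x y) (alexandrovQuasimetric U y z) := by
  unfold alexandrovQuasimetric
  split_ifs <;> simp_all
  exact ‹z ∉ U x› (hU x y ‹y ∈ U x› ‹z ∈ U y›)

theorem isQuasimetric_alexandrovQuasimetric (hU : ∀ x y, y ∈ U x → U y ⊆ U x) :
    IsQuasimetric M3 (alexandrovQuasimetric U) :=
  ⟨fun x y z => (M3_le_iff _ (max _ _)).2 (alexandrovQuasimetric_le_max hU x y z),
    alexandrovQuasimetric_self U⟩

end AlexandrovQuasimetric

open Classical in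
theorem stmt_8 {X : Type v} [T : TopologicalSpace X] (U : X → Set X)
    (hU : ∀ x : X, U x ∈ nhds x ∧ ∀ V ∈ nhds x, U x ⊆ V) :
    IsQuasimetric M3
      (fun x y : X => if x = y then (0 : Fin 3) else if y ∈ U x then 1 else 2) ∧
    (∀ x y : X, (if x = y then (0 : Fin 3) else if y ∈ U x then 1 else 2) = 0 → x = y) ∧
    qTopology M3
      (fun x y : X => if x = y then (0 : Fin 3) else if y ∈ U x then 1 else 2) = T := by
  have hU' : IsSmallestNhds U := hU
  refine ⟨isQuasimetric_alexandrovQuasimetric hU'.subset_of_mem,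
    fun x y => (alexandrovQuasimetric_eq_zero_iff U).1, ?_⟩
  change qTopology M3 (alexandrovQuasimetric U) = T
  have hball (x : X) : {y | alexandrovQuasimetric U x y ≤ 1} = U x :=
    Set.ext (alexandrovQuasimetric_le_one_iff U (hU'.mem_self x))
  simp only [qTopology_M3, hball, ← hU'.nhds_eq]
  exact T.mkOfNhds_nhds
end

section
/- Let M be a commutative MVS and (X,f) a nonempty M-space. Define f* on (X × M) × (X × M) by f*((x,m),(x,m)) = e and f*((x1,m1),(x2,m2)) = m1 + f(x1,x2) + m2 otherwise. Then f* is a quasimetric function, f* is surjective onto M, and f* restricted to X × {e} agrees with f under the identification x ↔ (x,e). Hence every M-space embeds isometrically into an M-full space. -/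
universe u v w

variable {M : Type u} {X : Type v}

/-- A commutative MVS is a commutative monoid, written multiplicatively: `⊴` becomes `∣`. -/
abbrev MVS.toCommMonoid (S : MVS M) (hc : S.Commutative) : CommMonoid M where
  mul := S.add
  one := S.e
  mul_assoc := S.assoc
  one_mul := S.e_add
  mul_one := S.add_e
  mul_comm := hc

theorem MVS.isQuasimetric_iff (S : MVS M) (hc : S.Commutative) (f : X → X → M) :
    letI := S.toCommMonoid hc
    IsQuasimetric S f ↔ (∀ x y z, f x z ∣ f x y * f y z) ∧ ∀ x, f x x = 1 :=
  and_congr (forall₃_congr fun _ _ _ => ⟨fun ⟨c, h⟩ => ⟨c, h.symm⟩, fun ⟨c, h⟩ => ⟨c, h.symm⟩⟩)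
    Iff.rfl

namespace QuasimetricExtension

variable {N Y : Type*} [CommMonoid N] [DecidableEq (Y × N)] (g : Y → Y → N)

/-- The extension `g*` of `g : Y → Y → N` to `Y × N`: the second coordinate of a point is an
extra cost paid for leaving or entering it. -/
def extend (p q : Y × N) : N :=
  if p = q then 1 else p.2 * g p.1 q.1 * q.2

theorem extend_self (p : Y × N) : extend g p p = 1 := if_pos rfl

theorem extend_dvd_mul (htri : ∀ x y z, g x z ∣ g x y * g y z) (p q r : Y × N) :
    extend g p r ∣ extend g p q * extend g q r := by
  rcases eq_or_ne p r with rfl | hpr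
  · simp only [extend_self, one_dvd]
  rcases eq_or_ne p q with rfl | hpq
  · simp only [extend_self, one_mul, dvd_refl]
  rcases eq_or_ne q r with rfl | hqr
  · simp only [extend_self, mul_one, dvd_refl]
  simp only [extend, if_neg hpr, if_neg hpq, if_neg hqr]
  -- the middle cost `q.2` is paid twice on the right and not at all on the left
  calc p.2 * g p.1 r.1 * r.2
      ∣ p.2 * (g p.1 q.1 * g q.1 r.1) * r.2 * (q.2 * q.2) :=
        dvd_mul_of_dvd_left (mul_dvd_mul_right (mul_dvd_mul_left _ (htri _ _ _)) _) _
    _ = p.2 * g p.1 q.1 * q.2 * (q.2 * g q.1 r.1 * r.2) := by ac_rfl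

theorem extend_mk_one (hg : ∀ x, g x x = 1) (x y : Y) : extend g (x, 1) (y, 1) = g x y := by
  rcases eq_or_ne x y with rfl | hxy
  · rw [extend_self, hg]
  · rw [extend, if_neg (by simpa using hxy), one_mul, mul_one]

theorem surjective_uncurry_extend [Nonempty Y] (hg : ∀ x, g x x = 1) :
    Function.Surjective (Function.uncurry (extend g)) := by
  intro m
  obtain ⟨x⟩ := ‹Nonempty Y›
  refine ⟨((x, 1), (x, m)), ?_⟩
  simp only [Function.uncurry, extend]
  split_ifs with h
  · exact congrArg Prod.snd h
  · rw [hg, one_mul, one_mul]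

end QuasimetricExtension

open Classical in
theorem stmt_14 (S : MVS M) (hc : S.Commutative) [Nonempty X]
    (f : X → X → M) (hf : IsQuasimetric S f) :
    IsQuasimetric S
      (fun p q : X × M => if p = q then S.e else S.add (S.add p.2 (f p.1 q.1)) q.2) ∧
    Function.Surjective (Function.uncurry
      (fun p q : X × M => if p = q then S.e else S.add (S.add p.2 (f p.1 q.1)) q.2)) ∧
    ∀ x y : X,
      (fun p q : X × M => if p = q then S.e else S.add (S.add p.2 (f p.1 q.1)) q.2)
        (x, S.e) (y, S.e) = f x y := by
  let := S.toCommMonoid hc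
  obtain ⟨htri, hself⟩ := (S.isQuasimetric_iff hc f).1 hf
  open QuasimetricExtension in
  exact ⟨(S.isQuasimetric_iff hc _).2 ⟨extend_dvd_mul f htri, extend_self f⟩,
    surjective_uncurry_extend f hself, extend_mk_one f hself⟩
end
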